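/- For a constant-action X-program (P, θ) with output X, and uniform a, d over F_2^n: P(X·sᵀ = 0) = (1/2)(1 + E_a[exp(iθ·Σ_{p∈P}(−1)^{p·aᵀ}(1 − (−1)^{p·sᵀ}))]), and in particular the right-hand side is real. -/

import Mathlib

/-- Hamming weight of a binary vector: number of coordinates equal to 1. -/
def wt {ι : Type*} [Fintype ι] (a : ι → ZMod 2) : ℕ :=
  (Finset.univ.filter fun i => a i = 1).card

/-- Output distribution of the constant-action X-program given by the k-by-n binary
matrix `P` with action `θ`: `P(X = x)`. -/
noncomputable def XProb {k n : ℕ} (P : Matrix (Fin k) (Fin n) (ZMod 2)) (θ : ℝ)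
    (x : Fin n → ZMod 2) : ℝ :=
  ‖∑ a ∈ Finset.univ.filter (fun a : Fin k → ZMod 2 => Matrix.vecMul a P = x),
    (Real.cos θ : ℂ) ^ (k - wt a) * (Complex.I * Real.sin θ) ^ (wt a)‖ ^ 2

/-- The bias of the X-program output distribution in direction `s`:
`P(X ⬝ sᵀ = 0)`, the probability that the output is orthogonal to `s` over `F₂`. -/
noncomputable def bias {k n : ℕ} (P : Matrix (Fin k) (Fin n) (ZMod 2)) (θ : ℝ)
    (s : Fin n → ZMod 2) : ℝ :=
  ∑ x ∈ Finset.univ.filter (fun x : Fin n → ZMod 2 => dotProduct x s = 0), XProb P θ x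

/-! The amplitude `x ↦ ⟨x| ∏ⱼ exp(iθ X^{pⱼ}) |0⟩` has Walsh–Hadamard transform
`f v = exp(iθ Σⱼ (-1)^{pⱼ·v})`: expanding `∏ⱼ (cos θ + i sin θ X^{pⱼ})` factorises the transform
over the rows. Writing `P(X·s = 0) = ½ Σₓ (1 + (-1)^{x·s}) P(X = x)`, a twisted Parseval identity
turns each correlation `Σₓ (-1)^{x·w} P(X = x)` into the average of `f v · conj (f (v + w))`.
For `w = 0` this is `1` since `|f| = 1`, and for `w = s` it is `E`. The bias is a real number, so
`½ (1 + E)` is real. -/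

open Finset Matrix Complex ComplexConjugate

lemma ZMod.eq_zero_or_eq_one (z : ZMod 2) : z = 0 ∨ z = 1 := by decide +revert

def signChar : AddChar (ZMod 2) ℂ where
  toFun z := if z = 1 then -1 else 1
  map_zero_eq_one' := by simp
  map_add_eq_mul' a b := by
    rcases a.eq_zero_or_eq_one with rfl | rfl <;> rcases b.eq_zero_or_eq_one with rfl | rfl <;>
      simp [show (1 : ZMod 2) + 1 = 0 from rfl]

lemma signChar_one : signChar 1 = -1 := rfl

lemma signChar_sum {α : Type*} (s : Finset α) (f : α → ZMod 2) :
    signChar (∑ i ∈ s, f i) = ∏ i ∈ s, signChar (f i) :=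
  map_prod signChar.toMonoidHom (fun i ↦ Multiplicative.ofAdd (f i)) s

lemma conj_signChar (z : ZMod 2) : conj (signChar z) = signChar z := by
  rcases z.eq_zero_or_eq_one with rfl | rfl <;> simp [signChar]

lemma cos_add_signChar_mul_I_mul_sin (θ : ℝ) (z : ZMod 2) :
    (Real.cos θ : ℂ) + signChar z * (I * Real.sin θ) = exp (I * θ * signChar z) := by
  rw [mul_comm I, mul_assoc, mul_comm I, exp_mul_I]
  rcases z.eq_zero_or_eq_one with rfl | rfl <;> simp [signChar_one, ofReal_cos, ofReal_sin]

lemma prod_ite_eq_pow_wt {κ M : Type*} [Fintype κ] [CommMonoid M] (a : κ → ZMod 2) (p q : M) :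
    ∏ j, (if a j = 1 then q else p) = p ^ (Fintype.card κ - wt a) * q ^ wt a := by
  rw [prod_ite, prod_const, prod_const, mul_comm, wt, ← card_univ,
    ← card_filter_add_card_filter_not (s := univ) (fun j ↦ a j = 1), Nat.add_sub_cancel_left]

variable {ι κ : Type*} [Fintype ι] [Fintype κ]

lemma sum_signChar_dotProduct [DecidableEq ι] (u : ι → ZMod 2) :
    ∑ v, signChar (u ⬝ᵥ v) = if u = 0 then (2 : ℂ) ^ Fintype.card ι else 0 := by
  split_ifs with hu
  · simp [hu]
  obtain ⟨i, hi⟩ := Function.ne_iff.1 hu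
  have hui : u i = 1 := (u i).eq_zero_or_eq_one.resolve_left hi
  refine eq_zero_of_mul_eq_self_left (b := signChar (u ⬝ᵥ Pi.single i 1)) ?_ ?_
  · norm_num [dotProduct_single, hui, signChar_one]
  rw [mul_sum]
  exact Fintype.sum_equiv (Equiv.addLeft (Pi.single i 1)) _ _ fun v ↦ by
    simp [dotProduct_add, AddChar.map_add_eq_mul]

noncomputable def walsh [DecidableEq ι] (f : (ι → ZMod 2) → ℂ) (v : ι → ZMod 2) : ℂ :=
  ∑ x, signChar (x ⬝ᵥ v) * f x

lemma sum_signChar_mul_mul_conj_eq_sum_walsh [DecidableEq ι] (f : (ι → ZMod 2) → ℂ)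
    (w : ι → ZMod 2) :
    ∑ x, signChar (x ⬝ᵥ w) * (f x * conj (f x)) =
      ((2 : ℂ) ^ Fintype.card ι)⁻¹ * ∑ v, walsh f v * conj (walsh f (v + w)) := by
  have hneg : ∀ y : ι → ZMod 2, -y = y := fun y ↦ funext fun i ↦ ZMod.neg_eq_self_mod_two _
  have hexpand : ∑ v, walsh f v * conj (walsh f (v + w)) = ∑ x, ∑ y,
      (∑ v, signChar ((x + y) ⬝ᵥ v)) * (signChar (y ⬝ᵥ w) * (f x * conj (f y))) := by
    simp only [walsh, map_sum, map_mul, conj_signChar, sum_mul_sum]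
    simp only [sum_mul]
    rw [sum_comm]
    refine sum_congr rfl fun x _ ↦ sum_comm.trans (sum_congr rfl fun y _ ↦ sum_congr rfl fun v _ ↦ ?_)
    simp only [add_dotProduct, dotProduct_add, AddChar.map_add_eq_mul]
    ring
  simp only [hexpand, sum_signChar_dotProduct, add_eq_zero_iff_eq_neg, hneg, ite_mul, zero_mul,
    sum_ite_eq, mem_univ, if_true, mul_sum]
  refine sum_congr rfl fun x _ ↦ ?_
  field_simp

lemma sum_signChar_dotProduct_mul_prod [DecidableEq κ] (c : κ → ZMod 2) (g : ZMod 2 → ℂ) :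
    ∑ a : κ → ZMod 2, signChar (a ⬝ᵥ c) * ∏ j, g (a j) = ∏ j, (g 0 + signChar (c j) * g 1) := by
  have hfactor : ∀ j, g 0 + signChar (c j) * g 1 = ∑ b, signChar (b * c j) * g b := fun j ↦ by
    rw [show (univ : Finset (ZMod 2)) = {0, 1} by decide, sum_pair zero_ne_one]
    simp
  simp only [hfactor, Fintype.prod_sum, dotProduct, signChar_sum, ← prod_mul_distrib]

noncomputable def amplitude [DecidableEq κ] (P : Matrix κ ι (ZMod 2)) (θ : ℝ)
    (x : ι → ZMod 2) : ℂ :=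
  ∑ a with a ᵥ* P = x, ∏ j, if a j = 1 then I * Real.sin θ else (Real.cos θ : ℂ)

noncomputable def phase (P : Matrix κ ι (ZMod 2)) (θ : ℝ) (v : ι → ZMod 2) : ℂ :=
  exp (I * θ * ∑ j, signChar (P j ⬝ᵥ v))

lemma walsh_amplitude [DecidableEq ι] [DecidableEq κ] (P : Matrix κ ι (ZMod 2)) (θ : ℝ)
    (v : ι → ZMod 2) : walsh (amplitude P θ) v = phase P θ v := by
  have hfiber : walsh (amplitude P θ) v = ∑ a : κ → ZMod 2, signChar (a ⬝ᵥ P *ᵥ v) *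
      ∏ j, if a j = 1 then I * Real.sin θ else (Real.cos θ : ℂ) := by
    simp only [walsh, amplitude, mul_sum, dotProduct_mulVec]
    rw [← sum_fiberwise univ (fun a ↦ a ᵥ* P)]
    exact sum_congr rfl fun x _ ↦ sum_congr rfl fun a ha ↦ by rw [(mem_filter.1 ha).2]
  refine hfiber.trans ((sum_signChar_dotProduct_mul_prod _
    fun b ↦ if b = 1 then I * Real.sin θ else (Real.cos θ : ℂ)).trans ?_)
  simp only [if_neg zero_ne_one, if_true, cos_add_signChar_mul_I_mul_sin, phase, mul_sum, exp_sum]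
  rfl

lemma phase_mul_conj_phase_add (P : Matrix κ ι (ZMod 2)) (θ : ℝ) (v w : ι → ZMod 2) :
    phase P θ v * conj (phase P θ (v + w)) =
      exp (I * θ * ∑ j, signChar (P j ⬝ᵥ v) * (1 - signChar (P j ⬝ᵥ w))) := by
  rw [phase, phase, ← exp_conj, ← exp_add]
  congr 1
  simp only [map_mul, conj_I, conj_ofReal, map_sum, conj_signChar, dotProduct_add,
    AddChar.map_add_eq_mul, mul_sub, mul_one, sum_sub_distrib]
  ring

lemma sum_filter_dotProduct_eq_zero [DecidableEq ι] (g : (ι → ZMod 2) → ℂ) (s : ι → ZMod 2) :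
    ∑ x with x ⬝ᵥ s = 0, g x = 1 / 2 * (∑ x, g x + ∑ x, signChar (x ⬝ᵥ s) * g x) := by
  rw [sum_filter, ← sum_add_distrib, mul_sum]
  refine sum_congr rfl fun x _ ↦ ?_
  rcases (x ⬝ᵥ s).eq_zero_or_eq_one with h | h <;> simp [h, signChar_one]
  ring

variable {k n : ℕ}

lemma XProb_eq_amplitude_mul_conj (P : Matrix (Fin k) (Fin n) (ZMod 2)) (θ : ℝ)
    (x : Fin n → ZMod 2) : (XProb P θ x : ℂ) = amplitude P θ x * conj (amplitude P θ x) := by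
  simp only [XProb, mul_conj, normSq_eq_norm_sq, amplitude, prod_ite_eq_pow_wt, Fintype.card_fin,
    ofReal_pow]

lemma sum_signChar_mul_XProb (P : Matrix (Fin k) (Fin n) (ZMod 2)) (θ : ℝ) (w : Fin n → ZMod 2) :
    ∑ x, signChar (x ⬝ᵥ w) * (XProb P θ x : ℂ) = 1 / (2 : ℂ) ^ n *
      ∑ a, exp (I * θ * ∑ j, signChar (P j ⬝ᵥ a) * (1 - signChar (P j ⬝ᵥ w))) := by
  simp only [XProb_eq_amplitude_mul_conj, sum_signChar_mul_mul_conj_eq_sum_walsh, walsh_amplitude,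
    phase_mul_conj_phase_add, Fintype.card_fin, one_div]

lemma sum_XProb (P : Matrix (Fin k) (Fin n) (ZMod 2)) (θ : ℝ) : ∑ x, XProb P θ x = 1 := by
  have h := sum_signChar_mul_XProb P θ 0
  norm_num [Fintype.card_fun] at h
  exact_mod_cast h

theorem bias_eq_half_one_add_expectation {k n : ℕ} (P : Matrix (Fin k) (Fin n) (ZMod 2))
    (θ : ℝ) (s : Fin n → ZMod 2)
    (E : ℂ)
    (hE : E = (1 / (2 : ℂ) ^ n) * ∑ a : Fin n → ZMod 2,
      Complex.exp (Complex.I * θ * ∑ i : Fin k,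
        (if dotProduct (P i) a = 1 then (-1 : ℂ) else 1) *
          (1 - (if dotProduct (P i) s = 1 then (-1 : ℂ) else 1)))) :
    (bias P θ s : ℂ) = (1 / 2) * (1 + E) ∧ ((1 / 2) * (1 + E)).im = 0 := by
  have hcorr : E = ∑ x, signChar (x ⬝ᵥ s) * (XProb P θ x : ℂ) := by
    rw [hE, sum_signChar_mul_XProb]
    -- `signChar` unfolds to the `if`-expressions of `hE`
    rfl
  have hbias : (bias P θ s : ℂ) = 1 / 2 * (1 + E) := by
    rw [bias, ofReal_sum, sum_filter_dotProduct_eq_zero, ← ofReal_sum, sum_XProb, ofReal_one, hcorr]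
  exact ⟨hbias, by rw [← hbias, ofReal_im]⟩
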